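/- Let M ≥ 2 and K be positive integers, let Z be a real M×K matrix, and let α > 0. Write R = Z Zᵀ, let ‖·‖_fro denote the Frobenius norm, and for each i ∈ {1,…,M} let Z_{i:=0} denote the matrix obtained from Z by replacing its i-th row with zeros. Define the intra-channel reconstruction cost L̂(Ĉ) = ‖(1/(M−1)) Σ_{i=1}^{M} (Z − Ĉ Z_{i:=0})‖²_fro + α⁻² ‖Ĉ‖²_fro for real M×M matrices Ĉ. Then the matrix Ĉ* = (M/(M−1)) · R (R + α⁻² I)⁻¹ is a global minimizer of L̂, i.e., L̂(Ĉ*) ≤ L̂(Ĉ) for every real M×M matrix Ĉ. -/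

import Mathlib

open Matrix BigOperators

/-- Squared Frobenius norm of a real matrix. -/
noncomputable def frobSq {m n : ℕ} (A : Matrix (Fin m) (Fin n) ℝ) : ℝ :=
  ∑ i, ∑ j, (A i j) ^ 2

/-- Frobenius inner product. -/
noncomputable def finner {m n : ℕ} (A B : Matrix (Fin m) (Fin n) ℝ) : ℝ :=
  ∑ i, ∑ j, A i j * B i j

lemma frobSq_nonneg {m n : ℕ} (A : Matrix (Fin m) (Fin n) ℝ) : 0 ≤ frobSq A :=
  Finset.sum_nonneg fun _ _ => Finset.sum_nonneg fun _ _ => sq_nonneg _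

lemma frobSq_add {m n : ℕ} (A B : Matrix (Fin m) (Fin n) ℝ) :
    frobSq (A + B) = frobSq A + 2 * finner A B + frobSq B := by
  unfold frobSq finner
  simp_rw [Finset.mul_sum, ← Finset.sum_add_distrib]
  exact Finset.sum_congr rfl fun i _ => Finset.sum_congr rfl fun j _ => by
    simp only [Matrix.add_apply]; ring

lemma finner_mul_right {m n p : ℕ} (A : Matrix (Fin m) (Fin p) ℝ)
    (D : Matrix (Fin m) (Fin n) ℝ) (Z : Matrix (Fin n) (Fin p) ℝ) :
    finner A (D * Z) = finner (A * Zᵀ) D := by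
  unfold finner
  refine Finset.sum_congr rfl fun i _ => ?_
  simp_rw [Matrix.mul_apply, Finset.mul_sum, Finset.sum_mul, Matrix.transpose_apply]
  rw [Finset.sum_comm]
  exact Finset.sum_congr rfl fun k _ => Finset.sum_congr rfl fun j _ => by ring

lemma finner_add_left {m n : ℕ} (A B C : Matrix (Fin m) (Fin n) ℝ) :
    finner (A + B) C = finner A C + finner B C := by
  unfold finner
  simp_rw [← Finset.sum_add_distrib]
  exact Finset.sum_congr rfl fun i _ => Finset.sum_congr rfl fun j _ => by
    simp only [Matrix.add_apply]; ring

lemma finner_smul_left {m n : ℕ} (c : ℝ) (A B : Matrix (Fin m) (Fin n) ℝ) :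
    finner (c • A) B = c * finner A B := by
  unfold finner
  simp_rw [Finset.mul_sum]
  exact Finset.sum_congr rfl fun i _ => Finset.sum_congr rfl fun j _ => by
    simp only [Matrix.smul_apply, smul_eq_mul]; ring

lemma finner_zero_left {m n : ℕ} (B : Matrix (Fin m) (Fin n) ℝ) :
    finner 0 B = 0 := by
  unfold finner; simp

lemma finner_neg_right {m n : ℕ} (A B : Matrix (Fin m) (Fin n) ℝ) :
    finner A (-B) = - finner A B := by
  unfold finner
  simp_rw [← Finset.sum_neg_distrib]
  exact Finset.sum_congr rfl fun i _ => Finset.sum_congr rfl fun j _ => by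
    simp only [Matrix.neg_apply]; ring

lemma frobSq_neg {m n : ℕ} (A : Matrix (Fin m) (Fin n) ℝ) :
    frobSq (-A) = frobSq A := by
  unfold frobSq
  exact Finset.sum_congr rfl fun i _ => Finset.sum_congr rfl fun j _ => by
    simp only [Matrix.neg_apply]; ring

/-- Proposition 1: the matrix `Ĉ* = (M/(M−1)) R (R + α⁻² I)⁻¹` globally minimizes the
intra-channel reconstruction cost
`L̂(Ĉ) = ‖(1/(M−1)) Σᵢ (Z − Ĉ Z_{i:=0})‖²_fro + α⁻² ‖Ĉ‖²_fro`. -/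
theorem conceptor_minimizes_intra_channel_cost
    (M K : ℕ) (hM : 2 ≤ M) (hK : 0 < K)
    (Z : Matrix (Fin M) (Fin K) ℝ) (α : ℝ) (hα : 0 < α)
    (R : Matrix (Fin M) (Fin M) ℝ) (hR : R = Z * Zᵀ)
    (L : Matrix (Fin M) (Fin M) ℝ → ℝ)
    (hL : ∀ C : Matrix (Fin M) (Fin M) ℝ,
      L C = frobSq ((((M : ℝ) - 1)⁻¹) • ∑ i : Fin M, (Z - C * (Z.updateRow i 0)))
        + (α ^ 2)⁻¹ * frobSq C)
    (Cstar : Matrix (Fin M) (Fin M) ℝ)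
    (hCstar : Cstar = ((M : ℝ) / ((M : ℝ) - 1)) •
      (R * (R + (α ^ 2)⁻¹ • (1 : Matrix (Fin M) (Fin M) ℝ))⁻¹)) :
    ∀ C : Matrix (Fin M) (Fin M) ℝ, L Cstar ≤ L C := by
  intro C
  set β : ℝ := (M : ℝ) / ((M : ℝ) - 1) with hβ
  set S : Matrix (Fin M) (Fin M) ℝ := R + (α ^ 2)⁻¹ • (1 : Matrix (Fin M) (Fin M) ℝ) with hS
  have hM1 : ((M : ℝ) - 1) ≠ 0 := by
    have : (2 : ℝ) ≤ (M : ℝ) := by exact_mod_cast hM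
    linarith
  -- Step A: rewrite the cost
  have hrowsum : (∑ i : Fin M, Z.updateRow i 0) = ((M : ℝ) - 1) • Z := by
    ext a b
    simp only [Matrix.sum_apply, Matrix.updateRow_apply, Matrix.smul_apply, smul_eq_mul,
      Pi.zero_apply]
    have : ∀ i : Fin M, (if a = i then (0:ℝ) else Z a b)
        = Z a b - (if a = i then Z a b else 0) := by
      intro i; by_cases h : a = i <;> simp [h]
    rw [Finset.sum_congr rfl fun i _ => this i, Finset.sum_sub_distrib]
    simp [Finset.sum_ite_eq, mul_comm]
    ring
  have hkey : ∀ D : Matrix (Fin M) (Fin M) ℝ,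
      (((M : ℝ) - 1)⁻¹) • ∑ i : Fin M, (Z - D * (Z.updateRow i 0)) = β • Z - D * Z := by
    intro D
    rw [Finset.sum_sub_distrib, ← Matrix.mul_sum, hrowsum, Finset.sum_const]
    ext a b
    simp only [Matrix.smul_apply, Matrix.sub_apply, Matrix.smul_apply, smul_eq_mul,
      Matrix.mul_smul, Matrix.smul_apply, Finset.card_univ, Fintype.card_fin, ← Nat.cast_smul_eq_nsmul ℝ]
    field_simp [hβ]
    have hdiv : ((M : ℝ) - 1) * β = M := by rw [hβ]; field_simp
    linear_combination (-(Z a b)) * hdiv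
  -- Step B: S is invertible
  have hRpsd : R.PosSemidef := by
    rw [hR]
    have := Matrix.posSemidef_self_mul_conjTranspose Z
    simpa using this
  have hSpd : S.PosDef := by
    have hdiag : (α ^ 2)⁻¹ • (1 : Matrix (Fin M) (Fin M) ℝ)
        = Matrix.diagonal (fun _ => (α ^ 2)⁻¹) := by
      ext i j
      by_cases h : i = j <;> simp [Matrix.diagonal_apply, h]
    have hpd : ((α ^ 2)⁻¹ • (1 : Matrix (Fin M) (Fin M) ℝ)).PosDef := by
      rw [hdiag, Matrix.posDef_diagonal_iff]
      intro i
      positivity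
    rw [hS]
    exact Matrix.PosDef.posSemidef_add hRpsd hpd
  have hSinv : S⁻¹ * S = 1 := Matrix.nonsing_inv_mul S hSpd.det_pos.ne'.isUnit
  have hCS : Cstar * S = β • R := by
    rw [hCstar, Matrix.smul_mul, Matrix.mul_assoc, hSinv, Matrix.mul_one]
  have hnormal : Cstar * R + (α ^ 2)⁻¹ • Cstar = β • R := by
    have h : Cstar * S = Cstar * R + (α ^ 2)⁻¹ • Cstar := by
      rw [hS, Matrix.mul_add, Matrix.mul_smul, Matrix.mul_one]
    rw [← h, hCS]
  set D : Matrix (Fin M) (Fin M) ℝ := C - Cstar with hD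
  have hCeq : C = Cstar + D := by rw [hD]; abel
  have hcross : finner (Cstar * Z - β • Z) (D * Z) + (α ^ 2)⁻¹ * finner Cstar D = 0 := by
    rw [finner_mul_right]
    have h1 : (Cstar * Z - β • Z) * Zᵀ = Cstar * R - β • R := by
      rw [Matrix.sub_mul, Matrix.smul_mul, Matrix.mul_assoc, hR]
    rw [h1, ← finner_smul_left, ← finner_add_left]
    have h2 : Cstar * R - β • R + (α ^ 2)⁻¹ • Cstar = 0 := by
      rw [sub_add_eq_add_sub, hnormal, sub_self]
    rw [h2, finner_zero_left]
  rw [hL C, hL Cstar, hkey, hkey]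
  have hE : β • Z - C * Z = (β • Z - Cstar * Z) + (-(D * Z)) := by
    rw [hCeq, Matrix.add_mul]; abel
  rw [hE, hCeq, frobSq_add, frobSq_add, finner_neg_right, frobSq_neg]
  have hx : finner (β • Z - Cstar * Z) (D * Z) = - finner (Cstar * Z - β • Z) (D * Z) := by
    have : β • Z - Cstar * Z = -(Cstar * Z - β • Z) := by abel
    rw [this]
    unfold finner
    simp_rw [← Finset.sum_neg_distrib]
    exact Finset.sum_congr rfl fun i _ => Finset.sum_congr rfl fun j _ => by
      simp only [Matrix.neg_apply]; ring
  have h1 := frobSq_nonneg (D * Z)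
  have h2 := frobSq_nonneg D
  have h3 : (0:ℝ) < (α ^ 2)⁻¹ := by positivity
  nlinarith [hcross, hx, h1, h2, h3, mul_nonneg h3.le h2]
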